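/- For all x ∈ ℝⁿ and y ∈ ℝᵐ, the gradient and Hessian estimation errors satisfy ‖∇P(x) − ∇_x f(x,y)‖ ≤ ℓ‖y − y*(x)‖ and ‖∇²P(x) − H(x,y)‖ ≤ L_H ‖y − y*(x)‖, where L_H = ρ(1+κ)² and the second norm is the operator norm. -/

import Mathlib

noncomputable section

open RealInnerProductSpace

/-- `ℝⁿ` as a Euclidean space. -/
abbrev En (n : ℕ) := EuclideanSpace ℝ (Fin n)

/-- The point `(x, y)` in the Euclidean (ℓ²) product `ℝⁿ × ℝᵐ`. -/
def pair {n m : ℕ} (x : En n) (y : En m) : WithLp 2 (En n × En m) :=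
  (WithLp.equiv 2 (En n × En m)).symm (x, y)

/-- Partial gradient `∇ₓ f(x, y)` with respect to the first variable. -/
def gradx {n m : ℕ} (f : WithLp 2 (En n × En m) → ℝ) (x : En n) (y : En m) : En n :=
  gradient (fun x' => f (pair x' y)) x

/-- Partial gradient `∇_y f(x, y)` with respect to the second variable. -/
def grady {n m : ℕ} (f : WithLp 2 (En n × En m) → ℝ) (x : En n) (y : En m) : En m :=
  gradient (fun y' => f (pair x y')) y

/-- Second-order partial derivative `∇²ₓₓ f(x, y)`. -/
def Hxx {n m : ℕ} (f : WithLp 2 (En n × En m) → ℝ) (x : En n) (y : En m) : En n →L[ℝ] En n :=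
  fderiv ℝ (fun x' => gradx f x' y) x

/-- Second-order partial derivative `∇²ₓ_y f(x, y)`. -/
def Hxy {n m : ℕ} (f : WithLp 2 (En n × En m) → ℝ) (x : En n) (y : En m) : En m →L[ℝ] En n :=
  fderiv ℝ (fun y' => gradx f x y') y

/-- Second-order partial derivative `∇²_yₓ f(x, y)`. -/
def Hyx {n m : ℕ} (f : WithLp 2 (En n × En m) → ℝ) (x : En n) (y : En m) : En n →L[ℝ] En m :=
  fderiv ℝ (fun x' => grady f x' y) x

/-- Second-order partial derivative `∇²_y_y f(x, y)`. -/
def Hyy {n m : ℕ} (f : WithLp 2 (En n × En m) → ℝ) (x : En n) (y : En m) : En m →L[ℝ] En m :=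
  fderiv ℝ (fun y' => grady f x y') y

/-- `H(x,y) = ∇²ₓₓf(x,y) − ∇²ₓ_yf(x,y) (∇²_y_yf(x,y))⁻¹ ∇²_yₓf(x,y)`. -/
def Hmat {n m : ℕ} (f : WithLp 2 (En n × En m) → ℝ) (x : En n) (y : En m) : En n →L[ℝ] En n :=
  Hxx f x y - (Hxy f x y).comp (((Hyy f x y).inverse).comp (Hyx f x y))

/-- `P(x) = max_y f(x, y)` (as a supremum over `y`). -/
def Pmax {n m : ℕ} (f : WithLp 2 (En n × En m) → ℝ) (x : En n) : ℝ := ⨆ y, f (pair x y)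

/-- The Hessian of `P` at `x`, as the derivative of the gradient map. -/
def hessP {n : ℕ} (P : En n → ℝ) (x : En n) : En n →L[ℝ] En n := fderiv ℝ (gradient P) x

/-!
Because `y ↦ f(x,y)` is `μ`-strongly concave, its gradient is `μ`-strongly monotone. Hence `y*`
is `(ℓ/μ)`-Lipschitz (compare `∇_y f(x₂,·)` at its zero `y*(x₂)` and at `y*(x₁)`), and
`⟪∇²_yy f v, v⟫ ≤ -μ‖v‖²`, so `∇²_yy f` is invertible with inverse of norm at most `1/μ`.
Along the graph `x ↦ (x, y*(x))` the partial gradient `∇_y f` vanishes; together with the a priori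
Lipschitz bound on `y*` this gives `Dy* = -(∇²_yy f)⁻¹ ∇²_yx f` (implicit differentiation) and
`∇P(x) = ∇_x f(x, y*(x))` (envelope theorem). Differentiating `∇_x f(x, y*(x))` once more gives
`∇²P(x) = H(x, y*(x))`.

The gradient estimate is then the `ℓ`-Lipschitz continuity of `∇f`. For the Hessian estimate,
`H(x,y*) - H(x,y)` splits into four terms, each `ρ‖y - y*‖` times a product of the bounds
`‖∇²_xy f‖, ‖∇²_yx f‖ ≤ ℓ` and `‖(∇²_yy f)⁻¹‖ ≤ 1/μ`; they add up to `ρ (1 + ℓ/μ)² ‖y - y*‖`.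
-/

open Asymptotics Filter Topology ContinuousLinearMap

section Concavity

variable {F : Type*} [NormedAddCommGroup F] [InnerProductSpace ℝ F] {μ : ℝ}

theorem mul_norm_le_norm_of_inner_le {v w : F} (h : ⟪w, v⟫ ≤ -(μ * ‖v‖ ^ 2)) :
    μ * ‖v‖ ≤ ‖w‖ := by
  rcases (norm_nonneg v).eq_or_lt with hv | hv
  · rw [← hv, mul_zero]; exact norm_nonneg w
  · refine le_of_mul_le_mul_right ?_ hv
    nlinarith [neg_le_of_abs_le (abs_real_inner_le_norm w v)]

variable [CompleteSpace F]

theorem IsLocalMax.gradient_eq_zero {g : F → ℝ} {y : F} (h : IsLocalMax g y) :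
    gradient g y = 0 := by
  rw [gradient, h.fderiv_eq_zero, map_zero]

theorem ContDiff.differentiable_gradient {g : F → ℝ} (hg : ContDiff ℝ 2 g) :
    Differentiable ℝ (gradient g) :=
  (InnerProductSpace.toDual ℝ F).symm.toContinuousLinearEquiv.differentiable.comp
    ((hg.fderiv_right (by norm_num)).differentiable one_ne_zero)

theorem ConcaveOn.inner_gradient_sub_nonpos {h : F → ℝ} {h' : F → F}
    (hc : ConcaveOn ℝ Set.univ h) (hh : ∀ y, HasGradientAt h (h' y) y) (y₁ y₂ : F) :
    ⟪h' y₁ - h' y₂, y₁ - y₂⟫ ≤ 0 := by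
  set u : ℝ → ℝ := h ∘ AffineMap.lineMap y₂ y₁
  have hu : ∀ t, HasDerivAt u ⟪h' (AffineMap.lineMap y₂ y₁ t), y₁ - y₂⟫ t := fun t => by
    simpa [InnerProductSpace.toDual_apply_apply] using
      (hh _).hasFDerivAt.comp_hasDerivAt t AffineMap.hasDerivAt_lineMap
  have hanti : AntitoneOn (deriv u) Set.univ :=
    (hc.comp_affineMap _).antitoneOn_deriv fun t _ => (hu t).differentiableAt
  have h10 := hanti (Set.mem_univ 0) (Set.mem_univ 1) zero_le_one
  simp only [(hu _).deriv, AffineMap.lineMap_apply_zero, AffineMap.lineMap_apply_one] at h10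
  rw [inner_sub_left]
  linarith

variable {g : F → ℝ}

theorem StrongConcaveOn.inner_gradient_sub_le (hg : StrongConcaveOn Set.univ μ g)
    (hd : Differentiable ℝ g) (y₁ y₂ : F) :
    ⟪gradient g y₁ - gradient g y₂, y₁ - y₂⟫ ≤ -(μ * ‖y₁ - y₂‖ ^ 2) := by
  have hgrad : ∀ y, HasGradientAt (fun y => g y + μ / 2 * ‖y‖ ^ 2) (gradient g y + μ • y) y := by
    intro y
    rw [hasGradientAt_iff_hasFDerivAt]
    refine ((hd y).hasFDerivAt.add
      ((hasStrictFDerivAt_norm_sq y).hasFDerivAt.const_mul (μ / 2))).congr_fderiv ?_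
    ext v
    simp only [InnerProductSpace.toDual_apply_apply, inner_add_left, real_inner_smul_left,
      inner_gradient_left, add_apply, smul_apply, coe_innerSL_apply, nsmul_eq_mul,
      Nat.cast_ofNat, smul_eq_mul, add_right_inj]
    ring
  have := (strongConcaveOn_iff_convex.mp hg).inner_gradient_sub_nonpos hgrad y₁ y₂
  rw [add_sub_add_comm, ← smul_sub, inner_add_left, real_inner_smul_left,
    real_inner_self_eq_norm_sq] at this
  linarith

theorem StrongConcaveOn.mul_norm_sub_le_norm_gradient (hg : StrongConcaveOn Set.univ μ g)
    (hd : Differentiable ℝ g) {y₀ : F} (hmax : ∀ y, g y ≤ g y₀) (y : F) :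
    μ * ‖y - y₀‖ ≤ ‖gradient g y‖ := by
  have := hg.inner_gradient_sub_le hd y y₀
  rw [IsLocalMax.gradient_eq_zero (Eventually.of_forall hmax), sub_zero] at this
  exact mul_norm_le_norm_of_inner_le this

theorem StrongConcaveOn.inner_apply_self_le {A : F →L[ℝ] F} (hg : StrongConcaveOn Set.univ μ g)
    (hd : Differentiable ℝ g) {y : F} (hA : HasFDerivAt (gradient g) A y) (v : F) :
    ⟪A v, v⟫ ≤ -(μ * ‖v‖ ^ 2) := by
  have hline : HasDerivAt (fun t : ℝ => gradient g (y + t • v)) (A v) 0 := by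
    refine hA.comp_hasDerivAt_of_eq 0 ?_ (by simp)
    simpa using ((hasDerivAt_id (0 : ℝ)).smul_const v).const_add y
  have hlim : Tendsto (fun t => ⟪slope (fun t : ℝ => gradient g (y + t • v)) 0 t, v⟫) (𝓝[>] 0)
      (𝓝 ⟪A v, v⟫) :=
    ((hasDerivAt_iff_tendsto_slope.mp hline).mono_left
      (nhdsWithin_mono 0 fun t ht => (ne_of_gt ht : t ≠ 0))).inner tendsto_const_nhds
  refine le_of_tendsto hlim ?_
  filter_upwards [self_mem_nhdsWithin] with t (ht : 0 < t)
  have hmono := hg.inner_gradient_sub_le hd (y + t • v) y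
  rw [add_sub_cancel_left, real_inner_smul_right, norm_smul, Real.norm_eq_abs,
    abs_of_pos ht] at hmono
  rw [slope_def_module, zero_smul, add_zero, sub_zero, real_inner_smul_left, inv_mul_le_iff₀ ht]
  exact le_of_mul_le_mul_left (hmono.trans_eq (by ring)) ht

end Concavity

namespace ContinuousLinearMap

variable {𝕜 E F G H : Type*} [NontriviallyNormedField 𝕜] [NormedAddCommGroup E] [NormedSpace 𝕜 E]
  [NormedAddCommGroup F] [NormedSpace 𝕜 F] [NormedAddCommGroup G] [NormedSpace 𝕜 G]
  [NormedAddCommGroup H] [NormedSpace 𝕜 H]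

theorem isInvertible_of_mul_norm_le [CompleteSpace 𝕜] [FiniteDimensional 𝕜 E] {A : E →L[𝕜] E}
    {μ : ℝ} (hμ : 0 < μ) (hA : ∀ v, μ * ‖v‖ ≤ ‖A v‖) : A.IsInvertible := by
  have hinj : Function.Injective A := by
    refine (injective_iff_map_eq_zero A).mpr fun v hv => norm_le_zero_iff.mp ?_
    have := hA v
    rw [hv, norm_zero] at this
    nlinarith [norm_nonneg v]
  have hbij : Function.Bijective A := ⟨hinj, LinearMap.injective_iff_surjective.mp hinj⟩
  exact ⟨(LinearEquiv.ofBijective (A : E →ₗ[𝕜] E) hbij).toContinuousLinearEquiv, rfl⟩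

theorem norm_inverse_le_of_mul_norm_le {A : E →L[𝕜] F} (hA : A.IsInvertible) {μ : ℝ} (hμ : 0 < μ)
    (hbound : ∀ v, μ * ‖v‖ ≤ ‖A v‖) : ‖A.inverse‖ ≤ μ⁻¹ := by
  refine opNorm_le_bound _ (inv_nonneg.mpr hμ.le) fun w => ?_
  have := hbound (A.inverse w)
  rw [hA.self_apply_inverse] at this
  rw [inv_mul_eq_div, le_div_iff₀ hμ]
  linarith

theorem IsInvertible.inverse_sub_inverse {A B : E →L[𝕜] F} (hA : A.IsInvertible)
    (hB : B.IsInvertible) : A.inverse - B.inverse = A.inverse ∘L (B - A) ∘L B.inverse := by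
  ext w
  simp [hA, hB]

theorem opNorm_comp_comp_le (f : G →L[𝕜] H) (g : F →L[𝕜] G) (h : E →L[𝕜] F) :
    ‖f ∘L g ∘L h‖ ≤ ‖f‖ * ‖g‖ * ‖h‖ := by
  rw [mul_assoc]
  exact (opNorm_comp_le _ _).trans (by gcongr; exact opNorm_comp_le _ _)

theorem norm_schur_sub_schur_le {A A' : E →L[𝕜] E} {B B' : F →L[𝕜] E} {C C' : F →L[𝕜] F}
    {D D' : E →L[𝕜] F} (hC : C.IsInvertible) (hC' : C'.IsInvertible) {ℓ K δ : ℝ}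
    (hB' : ‖B'‖ ≤ ℓ) (hD : ‖D‖ ≤ ℓ) (hCinv : ‖C.inverse‖ ≤ K) (hC'inv : ‖C'.inverse‖ ≤ K)
    (hA : ‖A - A'‖ ≤ δ) (hB : ‖B - B'‖ ≤ δ) (hCC' : ‖C - C'‖ ≤ δ) (hDD' : ‖D - D'‖ ≤ δ) :
    ‖(A - B ∘L C.inverse ∘L D) - (A' - B' ∘L C'.inverse ∘L D')‖ ≤ (1 + ℓ * K) ^ 2 * δ := by
  have hℓ : 0 ≤ ℓ := (norm_nonneg _).trans hD
  have hK : 0 ≤ K := (norm_nonneg _).trans hCinv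
  have hδ : 0 ≤ δ := (norm_nonneg _).trans hA
  have hsplit : (A - B ∘L C.inverse ∘L D) - (A' - B' ∘L C'.inverse ∘L D') =
      (A - A') - ((B - B') ∘L C.inverse ∘L D + B' ∘L (C.inverse - C'.inverse) ∘L D
        + B' ∘L C'.inverse ∘L (D - D')) := by
    simp only [sub_comp, comp_sub]
    abel
  have hinv : ‖C.inverse - C'.inverse‖ ≤ K * δ * K := by
    rw [hC.inverse_sub_inverse hC', ← norm_neg, ← comp_neg, ← neg_comp, neg_sub]
    exact (opNorm_comp_comp_le _ _ _).trans (by gcongr)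
  calc _ ≤ ‖A - A'‖ + (‖B - B'‖ * ‖C.inverse‖ * ‖D‖ + ‖B'‖ * ‖C.inverse - C'.inverse‖ * ‖D‖
        + ‖B'‖ * ‖C'.inverse‖ * ‖D - D'‖) := by
        rw [hsplit]
        refine (norm_sub_le _ _).trans (add_le_add le_rfl (norm_add₃_le.trans ?_))
        gcongr <;> exact opNorm_comp_comp_le _ _ _
    _ ≤ δ + (δ * K * ℓ + ℓ * (K * δ * K) * ℓ + ℓ * K * δ) := by gcongr
    _ = (1 + ℓ * K) ^ 2 * δ := by ring

end ContinuousLinearMap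

section Graph

variable {𝕜 E F G : Type*} [NontriviallyNormedField 𝕜] [NormedAddCommGroup E] [NormedSpace 𝕜 E]
  [NormedAddCommGroup F] [NormedSpace 𝕜 F] [NormedAddCommGroup G] [NormedSpace 𝕜 G]
  {Φ : E × F → G} {L : E × F →L[𝕜] G} {y : E → F} {x : E}

theorem DifferentiableAt.fderiv_comp_prodMk_left {y : F} (hΦ : DifferentiableAt 𝕜 Φ (x, y)) :
    fderiv 𝕜 (fun x' => Φ (x', y)) x = fderiv 𝕜 Φ (x, y) ∘L inl 𝕜 E F :=
  (hΦ.hasFDerivAt.comp x (hasFDerivAt_prodMk_left x y)).fderiv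

theorem DifferentiableAt.fderiv_comp_prodMk_right {y : F} (hΦ : DifferentiableAt 𝕜 Φ (x, y)) :
    fderiv 𝕜 (fun y' => Φ (x, y')) y = fderiv 𝕜 Φ (x, y) ∘L inr 𝕜 E F :=
  (hΦ.hasFDerivAt.comp y (hasFDerivAt_prodMk_right x y)).fderiv

theorem HasFDerivAt.isLittleO_comp_graph (hΦ : HasFDerivAt Φ L (x, y x))
    (hy : (fun x' => y x' - y x) =O[𝓝 x] fun x' => x' - x) :
    (fun x' => Φ (x', y x') - Φ (x, y x) -
      ((L ∘L inl 𝕜 E F) (x' - x) + (L ∘L inr 𝕜 E F) (y x' - y x))) =o[𝓝 x] fun x' => x' - x := by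
  have hsub : Tendsto (fun x' => x' - x) (𝓝 x) (𝓝 0) := tendsto_sub_nhds_zero_iff.mpr tendsto_id
  have hgraph : Tendsto (fun x' => (x', y x')) (𝓝 x) (𝓝 (x, y x)) :=
    tendsto_id.prodMk_nhds (tendsto_sub_nhds_zero_iff.mp (hy.trans_tendsto hsub))
  have hO : (fun x' => (x', y x') - (x, y x)) =O[𝓝 x] fun x' => x' - x :=
    (isBigO_refl _ _).prod_left hy
  refine ((hΦ.isLittleO.comp_tendsto hgraph).trans_isBigO hO).congr_left fun x' => ?_
  simp only [Function.comp_apply, Prod.mk_sub_mk, coe_comp, inl_apply, inr_apply, ← map_add,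
    Prod.mk_add_mk, add_zero, zero_add]

theorem hasFDerivAt_of_apply_graph_eq_zero (hΦ : HasFDerivAt Φ L (x, y x))
    (hy : (fun x' => y x' - y x) =O[𝓝 x] fun x' => x' - x) (hzero : ∀ x', Φ (x', y x') = 0)
    (hL : (L ∘L inr 𝕜 E F).IsInvertible) :
    HasFDerivAt y (-((L ∘L inr 𝕜 E F).inverse ∘L (L ∘L inl 𝕜 E F))) x := by
  rw [hasFDerivAt_iff_isLittleO]
  refine ((L ∘L inr 𝕜 E F).inverse.isBigO_comp _ _).trans_isLittleO
    ((HasFDerivAt.isLittleO_comp_graph hΦ hy).neg_left) |>.congr_left fun x' => ?_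
  have hinv := hL.inverse_apply_self (y x' - y x)
  simp only [coe_comp, Function.comp_apply, inr_apply] at hinv
  simp [hzero, hinv, add_comm]

theorem HasFDerivAt.comp_graph_of_comp_inr_eq_zero (hΦ : HasFDerivAt Φ L (x, y x))
    (hy : (fun x' => y x' - y x) =O[𝓝 x] fun x' => x' - x) (hL : L ∘L inr 𝕜 E F = 0) :
    HasFDerivAt (fun x' => Φ (x', y x')) (L ∘L inl 𝕜 E F) x := by
  rw [hasFDerivAt_iff_isLittleO]
  refine (HasFDerivAt.isLittleO_comp_graph hΦ hy).congr_left fun x' => ?_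
  rw [hL, zero_apply, add_zero]

end Graph

section L2Product

variable {E F : Type*} [NormedAddCommGroup E] [InnerProductSpace ℝ E] [CompleteSpace E]
  [NormedAddCommGroup F] [InnerProductSpace ℝ F] [CompleteSpace F]
  {g : WithLp 2 (E × F) → ℝ} {G : WithLp 2 (E × F)} {x : E} {y : F}

theorem HasGradientAt.comp_toLp_prodMk_left (h : HasGradientAt g G (WithLp.toLp 2 (x, y))) :
    HasGradientAt (fun x' => g (WithLp.toLp 2 (x', y))) G.fst x := by
  rw [hasGradientAt_iff_hasFDerivAt] at h ⊢
  refine (h.comp x ((WithLp.prodContinuousLinearEquiv 2 ℝ E F).symm.hasFDerivAt.comp x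
    (hasFDerivAt_prodMk_left x y))).congr_fderiv ?_
  ext v
  simp [WithLp.prod_inner_apply]

theorem HasGradientAt.comp_toLp_prodMk_right (h : HasGradientAt g G (WithLp.toLp 2 (x, y))) :
    HasGradientAt (fun y' => g (WithLp.toLp 2 (x, y'))) G.snd y := by
  rw [hasGradientAt_iff_hasFDerivAt] at h ⊢
  refine (h.comp y ((WithLp.prodContinuousLinearEquiv 2 ℝ E F).symm.hasFDerivAt.comp y
    (hasFDerivAt_prodMk_right x y))).congr_fderiv ?_
  ext v
  simp [WithLp.prod_inner_apply]

end L2Product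

section Minimax

variable {n m : ℕ} {f : WithLp 2 (En n × En m) → ℝ}

theorem gradx_eq_fst (hf : Differentiable ℝ f) (x : En n) (y : En m) :
    gradx f x y = (gradient f (pair x y)).fst :=
  (hf _).hasGradientAt.comp_toLp_prodMk_left.gradient

theorem grady_eq_snd (hf : Differentiable ℝ f) (x : En n) (y : En m) :
    grady f x y = (gradient f (pair x y)).snd :=
  (hf _).hasGradientAt.comp_toLp_prodMk_right.gradient

theorem differentiable_uncurry_comp_pair (hf : Differentiable ℝ f) :
    Differentiable ℝ fun p : En n × En m => f (pair p.1 p.2) :=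
  hf.comp (WithLp.prodContinuousLinearEquiv 2 ℝ (En n) (En m)).symm.differentiable

theorem differentiable_comp_pair_right (hf : Differentiable ℝ f) (x : En n) :
    Differentiable ℝ fun y => f (pair x y) :=
  (differentiable_uncurry_comp_pair hf).comp (differentiable_const x |>.prodMk differentiable_id)

theorem differentiable_uncurry_gradx (hf : ContDiff ℝ 2 f) :
    Differentiable ℝ fun p : En n × En m => gradx f p.1 p.2 := by
  have : (fun p : En n × En m => gradx f p.1 p.2) =
      WithLp.fstL 2 ℝ (En n) (En m) ∘ gradient f ∘
        (WithLp.prodContinuousLinearEquiv 2 ℝ (En n) (En m)).symm :=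
    funext fun p => gradx_eq_fst (hf.differentiable two_ne_zero) p.1 p.2
  rw [this]
  exact (WithLp.fstL 2 ℝ (En n) (En m)).differentiable.comp (hf.differentiable_gradient.comp
    (WithLp.prodContinuousLinearEquiv 2 ℝ (En n) (En m)).symm.differentiable)

theorem differentiable_uncurry_grady (hf : ContDiff ℝ 2 f) :
    Differentiable ℝ fun p : En n × En m => grady f p.1 p.2 := by
  have : (fun p : En n × En m => grady f p.1 p.2) =
      WithLp.sndL 2 ℝ (En n) (En m) ∘ gradient f ∘
        (WithLp.prodContinuousLinearEquiv 2 ℝ (En n) (En m)).symm :=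
    funext fun p => grady_eq_snd (hf.differentiable two_ne_zero) p.1 p.2
  rw [this]
  exact (WithLp.sndL 2 ℝ (En n) (En m)).differentiable.comp (hf.differentiable_gradient.comp
    (WithLp.prodContinuousLinearEquiv 2 ℝ (En n) (En m)).symm.differentiable)

theorem norm_pair_sub_pair_same_left (x : En n) (y y' : En m) :
    ‖pair x y - pair x y'‖ = ‖y - y'‖ := by
  rw [show pair x y - pair x y' = WithLp.toLp 2 (0, y - y') by simp [pair, ← WithLp.toLp_sub],
    WithLp.norm_toLp_snd]

theorem norm_pair_sub_pair_same_right (x x' : En n) (y : En m) :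
    ‖pair x y - pair x' y‖ = ‖x - x'‖ := by
  rw [show pair x y - pair x' y = WithLp.toLp 2 (x - x', 0) by simp [pair, ← WithLp.toLp_sub],
    WithLp.norm_toLp_fst]

theorem norm_gradx_sub_gradx_le {ℓ : ℝ} (hf : Differentiable ℝ f)
    (hlip : ∀ p q : WithLp 2 (En n × En m), ‖gradient f p - gradient f q‖ ≤ ℓ * ‖p - q‖)
    (x : En n) (y y' : En m) : ‖gradx f x y - gradx f x y'‖ ≤ ℓ * ‖y - y'‖ := by
  rw [gradx_eq_fst hf, gradx_eq_fst hf, ← WithLp.sub_fst, ← norm_pair_sub_pair_same_left x]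
  exact (WithLp.norm_fst_le ..).trans (hlip _ _)

theorem norm_grady_sub_grady_le {ℓ : ℝ} (hf : Differentiable ℝ f)
    (hlip : ∀ p q : WithLp 2 (En n × En m), ‖gradient f p - gradient f q‖ ≤ ℓ * ‖p - q‖)
    (x x' : En n) (y : En m) : ‖grady f x y - grady f x' y‖ ≤ ℓ * ‖x - x'‖ := by
  rw [grady_eq_snd hf, grady_eq_snd hf, ← WithLp.sub_snd, ← norm_pair_sub_pair_same_right x x' y]
  exact (WithLp.norm_snd_le ..).trans (hlip _ _)

theorem norm_Hxy_le {ℓ : ℝ} (hℓ : 0 ≤ ℓ) (hf : Differentiable ℝ f)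
    (hlip : ∀ p q : WithLp 2 (En n × En m), ‖gradient f p - gradient f q‖ ≤ ℓ * ‖p - q‖)
    (x : En n) (y : En m) : ‖Hxy f x y‖ ≤ ℓ :=
  norm_fderiv_le_of_lip' ℝ hℓ
    (Eventually.of_forall fun y' => norm_gradx_sub_gradx_le hf hlip x y' y)

theorem norm_Hyx_le {ℓ : ℝ} (hℓ : 0 ≤ ℓ) (hf : Differentiable ℝ f)
    (hlip : ∀ p q : WithLp 2 (En n × En m), ‖gradient f p - gradient f q‖ ≤ ℓ * ‖p - q‖)
    (x : En n) (y : En m) : ‖Hyx f x y‖ ≤ ℓ :=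
  norm_fderiv_le_of_lip' ℝ hℓ
    (Eventually.of_forall fun x' => norm_grady_sub_grady_le hf hlip x' x y)

theorem mul_norm_le_norm_Hyy_apply {μ : ℝ} (hf : ContDiff ℝ 2 f) {x : En n}
    (hconc : StrongConcaveOn Set.univ μ (fun y => f (pair x y))) (y v : En m) :
    μ * ‖v‖ ≤ ‖Hyy f x y v‖ := by
  have hHyy : HasFDerivAt (grady f x) (Hyy f x y) y :=
    ((differentiable_uncurry_grady hf).comp (differentiable_const x |>.prodMk differentiable_id)
      y).hasFDerivAt
  exact mul_norm_le_norm_of_inner_le (hconc.inner_apply_self_le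
    (differentiable_comp_pair_right (hf.differentiable two_ne_zero) x) hHyy v)

theorem norm_Hmat_sub_Hmat_le {ℓ μ ρ : ℝ} (hμ : 0 < μ) (hℓ : 0 ≤ ℓ) (hf : ContDiff ℝ 2 f)
    (hlip : ∀ p q : WithLp 2 (En n × En m), ‖gradient f p - gradient f q‖ ≤ ℓ * ‖p - q‖)
    (hxx : ∀ (x x' : En n) (y y' : En m),
      ‖Hxx f x y - Hxx f x' y'‖ ≤ ρ * ‖pair x y - pair x' y'‖)
    (hxy : ∀ (x x' : En n) (y y' : En m),
      ‖Hxy f x y - Hxy f x' y'‖ ≤ ρ * ‖pair x y - pair x' y'‖)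
    (hyx : ∀ (x x' : En n) (y y' : En m),
      ‖Hyx f x y - Hyx f x' y'‖ ≤ ρ * ‖pair x y - pair x' y'‖)
    (hyy : ∀ (x x' : En n) (y y' : En m),
      ‖Hyy f x y - Hyy f x' y'‖ ≤ ρ * ‖pair x y - pair x' y'‖)
    {x : En n} (hconc : StrongConcaveOn Set.univ μ (fun y => f (pair x y))) (y₁ y₂ : En m) :
    ‖Hmat f x y₁ - Hmat f x y₂‖ ≤ ρ * (1 + ℓ / μ) ^ 2 * ‖y₁ - y₂‖ := by
  have hHyy := mul_norm_le_norm_Hyy_apply hf hconc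
  have hinv := fun y => isInvertible_of_mul_norm_le hμ (hHyy y)
  have hd := hf.differentiable two_ne_zero
  rw [div_eq_mul_inv, mul_comm ρ, mul_assoc, ← norm_pair_sub_pair_same_left x]
  exact norm_schur_sub_schur_le (hinv y₁) (hinv y₂) (norm_Hxy_le hℓ hd hlip x y₂)
    (norm_Hyx_le hℓ hd hlip x y₁) (norm_inverse_le_of_mul_norm_le (hinv y₁) hμ (hHyy y₁))
    (norm_inverse_le_of_mul_norm_le (hinv y₂) hμ (hHyy y₂))
    (hxx x x y₁ y₂) (hxy x x y₁ y₂) (hyy x x y₁ y₂) (hyx x x y₁ y₂)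

section Maximizer

variable {ystar : En n → En m}

theorem Pmax_eq (hstar : ∀ x y, f (pair x y) ≤ f (pair x (ystar x))) :
    Pmax f = fun x => f (pair x (ystar x)) :=
  funext fun x => le_antisymm (ciSup_le (hstar x))
    (le_ciSup ⟨_, Set.forall_mem_range.mpr (hstar x)⟩ _)

theorem grady_ystar_eq_zero (hstar : ∀ x y, f (pair x y) ≤ f (pair x (ystar x))) (x : En n) :
    grady f x (ystar x) = 0 :=
  IsLocalMax.gradient_eq_zero (Eventually.of_forall (hstar x))

theorem mul_norm_ystar_sub_le {ℓ μ : ℝ} (hf : Differentiable ℝ f)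
    (hlip : ∀ p q : WithLp 2 (En n × En m), ‖gradient f p - gradient f q‖ ≤ ℓ * ‖p - q‖)
    (hconc : ∀ x, StrongConcaveOn Set.univ μ (fun y => f (pair x y)))
    (hstar : ∀ x y, f (pair x y) ≤ f (pair x (ystar x))) (x₁ x₂ : En n) :
    μ * ‖ystar x₁ - ystar x₂‖ ≤ ℓ * ‖x₁ - x₂‖ :=
  calc μ * ‖ystar x₁ - ystar x₂‖ ≤ ‖grady f x₂ (ystar x₁)‖ :=
        (hconc x₂).mul_norm_sub_le_norm_gradient (differentiable_comp_pair_right hf x₂)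
          (hstar x₂) _
    _ = ‖grady f x₂ (ystar x₁) - grady f x₁ (ystar x₁)‖ := by
        rw [grady_ystar_eq_zero hstar, sub_zero]
    _ ≤ ℓ * ‖x₁ - x₂‖ := by
        rw [norm_sub_rev x₁]
        exact norm_grady_sub_grady_le hf hlip _ _ _

theorem isBigO_ystar_sub {ℓ μ : ℝ} (hμ : 0 < μ) (hf : Differentiable ℝ f)
    (hlip : ∀ p q : WithLp 2 (En n × En m), ‖gradient f p - gradient f q‖ ≤ ℓ * ‖p - q‖)
    (hconc : ∀ x, StrongConcaveOn Set.univ μ (fun y => f (pair x y)))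
    (hstar : ∀ x y, f (pair x y) ≤ f (pair x (ystar x))) (x : En n) :
    (fun x' => ystar x' - ystar x) =O[𝓝 x] fun x' => x' - x :=
  IsBigO.of_bound (ℓ / μ) (Eventually.of_forall fun x' => by
    rw [div_mul_eq_mul_div, le_div_iff₀' hμ]
    exact mul_norm_ystar_sub_le hf hlip hconc hstar x' x)

theorem hasFDerivAt_ystar {μ : ℝ} (hμ : 0 < μ) (hf : ContDiff ℝ 2 f)
    (hconc : ∀ x, StrongConcaveOn Set.univ μ (fun y => f (pair x y)))
    (hstar : ∀ x y, f (pair x y) ≤ f (pair x (ystar x))) {x : En n}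
    (hy : (fun x' => ystar x' - ystar x) =O[𝓝 x] fun x' => x' - x) :
    HasFDerivAt ystar (-((Hyy f x (ystar x)).inverse ∘L Hyx f x (ystar x))) x := by
  have hΦ := differentiable_uncurry_grady hf (x, ystar x)
  rw [Hyy, Hyx, hΦ.fderiv_comp_prodMk_right, hΦ.fderiv_comp_prodMk_left]
  refine hasFDerivAt_of_apply_graph_eq_zero hΦ.hasFDerivAt hy (grady_ystar_eq_zero hstar) ?_
  rw [← hΦ.fderiv_comp_prodMk_right]
  exact isInvertible_of_mul_norm_le hμ (mul_norm_le_norm_Hyy_apply hf (hconc x) _)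

theorem gradient_Pmax_eq (hf : Differentiable ℝ f)
    (hstar : ∀ x y, f (pair x y) ≤ f (pair x (ystar x)))
    (hy : ∀ x, (fun x' => ystar x' - ystar x) =O[𝓝 x] fun x' => x' - x) :
    gradient (Pmax f) = fun x => gradx f x (ystar x) := by
  rw [Pmax_eq hstar]
  funext x
  have hΦ := differentiable_uncurry_comp_pair hf (x, ystar x)
  have hinr : fderiv ℝ (fun p : En n × En m => f (pair p.1 p.2)) (x, ystar x) ∘L
      inr ℝ (En n) (En m) = 0 := by
    rw [← hΦ.fderiv_comp_prodMk_right]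
    exact IsLocalMax.fderiv_eq_zero (Eventually.of_forall (hstar x))
  have hP := HasFDerivAt.comp_graph_of_comp_inr_eq_zero hΦ.hasFDerivAt (hy x) hinr
  rw [← hΦ.fderiv_comp_prodMk_left] at hP
  simp only [gradient, gradx, hP.fderiv]

theorem hessP_Pmax_eq {x : En n} (hf : ContDiff ℝ 2 f)
    (hgrad : gradient (Pmax f) = fun x => gradx f x (ystar x))
    (hy : HasFDerivAt ystar (-((Hyy f x (ystar x)).inverse ∘L Hyx f x (ystar x))) x) :
    hessP (Pmax f) x = Hmat f x (ystar x) := by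
  have hΦ := differentiable_uncurry_gradx hf (x, ystar x)
  have hchain : fderiv ℝ (fun x' => gradx f x' (ystar x')) x = _ :=
    (HasFDerivAt.comp (g := fun p : En n × En m => gradx f p.1 p.2) x hΦ.hasFDerivAt
      ((hasFDerivAt_id x).prodMk hy)).fderiv
  rw [hessP, hgrad, hchain, Hmat, Hxx, Hxy, hΦ.fderiv_comp_prodMk_left,
    hΦ.fderiv_comp_prodMk_right]
  refine ContinuousLinearMap.ext fun v => ?_
  simp [← map_sub]

end Maximizer

end Minimax

/-- For all `x, y`, the gradient and Hessian estimation errors satisfy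
`‖∇P(x) − ∇ₓf(x,y)‖ ≤ ℓ‖y − y*(x)‖` and `‖∇²P(x) − H(x,y)‖ ≤ L_H ‖y − y*(x)‖` with
`L_H = ρ(1+κ)²`, `κ = ℓ/μ`. -/
theorem statement5 {n m : ℕ} (f : WithLp 2 (En n × En m) → ℝ) (ℓ μ ρ : ℝ)
    (hμ : 0 < μ) (hμℓ : μ ≤ ℓ)
    (hf : ContDiff ℝ 2 f)
    (hlip : ∀ p q : WithLp 2 (En n × En m), ‖gradient f p - gradient f q‖ ≤ ℓ * ‖p - q‖)
    (hxx : ∀ (x x' : En n) (y y' : En m),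
      ‖Hxx f x y - Hxx f x' y'‖ ≤ ρ * ‖pair x y - pair x' y'‖)
    (hxy : ∀ (x x' : En n) (y y' : En m),
      ‖Hxy f x y - Hxy f x' y'‖ ≤ ρ * ‖pair x y - pair x' y'‖)
    (hyx : ∀ (x x' : En n) (y y' : En m),
      ‖Hyx f x y - Hyx f x' y'‖ ≤ ρ * ‖pair x y - pair x' y'‖)
    (hyy : ∀ (x x' : En n) (y y' : En m),
      ‖Hyy f x y - Hyy f x' y'‖ ≤ ρ * ‖pair x y - pair x' y'‖)
    (hconc : ∀ x : En n, StrongConcaveOn Set.univ μ (fun y => f (pair x y)))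
    (ystar : En n → En m)
    (hstar : ∀ (x : En n) (y : En m), f (pair x y) ≤ f (pair x (ystar x))) :
    ∀ (x : En n) (y : En m),
      ‖gradient (Pmax f) x - gradx f x y‖ ≤ ℓ * ‖y - ystar x‖ ∧
      ‖hessP (Pmax f) x - Hmat f x y‖ ≤ ρ * (1 + ℓ / μ) ^ 2 * ‖y - ystar x‖ := by
  intro x y
  have hd := hf.differentiable two_ne_zero
  have hy := isBigO_ystar_sub hμ hd hlip hconc hstar
  have hgrad := gradient_Pmax_eq hd hstar hy
  rw [norm_sub_rev y]
  constructor
  · rw [hgrad]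
    exact norm_gradx_sub_gradx_le hd hlip x (ystar x) y
  · rw [hessP_Pmax_eq hf hgrad (hasFDerivAt_ystar hμ hf hconc hstar (hy x))]
    exact norm_Hmat_sub_Hmat_le hμ (hμ.le.trans hμℓ) hf hlip hxx hxy hyx hyy (hconc x) _ _
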